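/- Let 0 < γ < 1 and let a ≥ 0 and s ≥ 0 be real numbers. Then for every z ∈ [0,π] the series f(z) = ∑_{k=1}^{∞} e^{−(a+s)k} · l_k^{2,γ} · (cos(k·z) − e^{s·k}) converges and f(z) ≥ 0. -/

import Mathlib

/-- Grünwald–Letnikov coefficient `g_k^α = (-1)^k * binom(α,k)`. -/
noncomputable def gl (a : ℝ) (k : ℕ) : ℝ :=
  (-1 : ℝ) ^ k * (∏ j ∈ Finset.range k, (a - j)) / (Nat.factorial k : ℝ)

/-- Shifted Grünwald weights. -/
noncomputable def glw (a : ℝ) : ℕ → ℝ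
  | 0 => a / 2 * gl a 0
  | (k+1) => a / 2 * gl a (k+1) + (2 - a) / 2 * gl a k

/-- Second-order Lubich coefficients `l_m^{2,γ}`. -/
noncomputable def lub2 (g : ℝ) (m : ℕ) : ℝ :=
  (3/2 : ℝ) ^ g * ∑ k ∈ Finset.range (m+1), (1/3 : ℝ) ^ k * gl g k * gl g (m - k)

/-- The Toeplitz matrix `B_α` of size `(M-1) × (M-1)`. -/
noncomputable def Bmat (a : ℝ) (M : ℕ) : Matrix (Fin (M-1)) (Fin (M-1)) ℝ :=
  fun i j => if (j : ℕ) ≤ (i : ℕ) + 1 then glw a ((i : ℕ) + 1 - (j : ℕ)) else 0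

/-- The symmetric matrix `A_α = B_α + B_αᵀ`. -/
noncomputable def Amat (a : ℝ) (M : ℕ) : Matrix (Fin (M-1)) (Fin (M-1)) ℝ :=
  Bmat a M + (Bmat a M).transpose

open Complex Metric

lemma gl_zero (a : ℝ) : gl a 0 = 1 := by simp [gl]

lemma gl_succ (a : ℝ) (k : ℕ) :
    gl a (k+1) = gl a k * (((k : ℝ) - a) / ((k : ℝ) + 1)) := by
  have h1 : (Nat.factorial k : ℝ) ≠ 0 := Nat.cast_ne_zero.2 (Nat.factorial_ne_zero k)
  have h2 : ((k : ℝ) + 1) ≠ 0 := by positivity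
  unfold gl
  rw [Finset.prod_range_succ, Nat.factorial_succ]
  push_cast
  field_simp
  ring

lemma gl_shift (γ : ℝ) (n : ℕ) :
    gl γ (n+1) = gl (γ-1) n * (-γ / ((n : ℝ) + 1)) := by
  have h1 : (Nat.factorial n : ℝ) ≠ 0 := Nat.cast_ne_zero.2 (Nat.factorial_ne_zero n)
  have h2 : ((n : ℝ) + 1) ≠ 0 := by positivity
  have hp : ∏ j ∈ Finset.range (n+1), (γ - j)
      = (∏ j ∈ Finset.range n, (γ - 1 - j)) * γ := by
    rw [Finset.prod_range_succ']
    congr 1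
    · exact Finset.prod_congr rfl fun i _ => by push_cast; ring
    · simp
  unfold gl
  rw [hp, Nat.factorial_succ]
  push_cast
  field_simp
  ring

lemma glm_bounds {γ : ℝ} (hγ0 : 0 < γ) (hγ1 : γ < 1) (n : ℕ) :
    0 ≤ gl (γ-1) n ∧ gl (γ-1) n ≤ 1 := by
  induction n with
  | zero => simp [gl_zero]
  | succ n ih =>
    rw [gl_succ]
    have hn1 : (0:ℝ) < (n:ℝ) + 1 := by positivity
    have hfac0 : 0 ≤ ((n : ℝ) - (γ-1)) / ((n:ℝ)+1) := by
      apply div_nonneg _ hn1.le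
      have hn : (0:ℝ) ≤ (n:ℝ) := Nat.cast_nonneg n
      have : γ ≤ (n:ℝ) + 1 := by linarith
      linarith
    have hfac1 : ((n : ℝ) - (γ-1)) / ((n:ℝ)+1) ≤ 1 := by
      rw [div_le_one hn1]; linarith
    constructor
    · exact mul_nonneg ih.1 hfac0
    · calc gl (γ-1) n * (((n:ℝ) - (γ-1)) / ((n:ℝ)+1)) ≤ 1 * 1 :=
        mul_le_mul ih.2 hfac1 hfac0 zero_le_one
      _ = 1 := by ring

lemma gl_nonpos {γ : ℝ} (hγ0 : 0 < γ) (hγ1 : γ < 1) (k : ℕ) :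
    gl γ (k+1) ≤ 0 := by
  induction k with
  | zero =>
    rw [gl_succ, gl_zero]
    simp only [Nat.cast_zero]
    nlinarith
  | succ k ih =>
    rw [gl_succ]
    apply mul_nonpos_of_nonpos_of_nonneg ih
    apply div_nonneg
    · have hn : (0:ℝ) ≤ (k:ℝ) := Nat.cast_nonneg k
      push_cast
      linarith
    · positivity

lemma abs_gl_le_one {γ : ℝ} (hγ0 : 0 < γ) (hγ1 : γ < 1) (k : ℕ) :
    |gl γ k| ≤ 1 := by
  induction k with
  | zero => simp [gl_zero]
  | succ k ih =>
    rw [gl_succ, abs_mul, abs_div]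
    have hn1 : (0:ℝ) < (k:ℝ) + 1 := by positivity
    have h1 : |(k:ℝ) - γ| ≤ (k:ℝ) + 1 := by
      rw [abs_le]; constructor <;> nlinarith [Nat.cast_nonneg (α := ℝ) k]
    have h2 : |(k:ℝ) + 1| = (k:ℝ) + 1 := abs_of_pos hn1
    calc |gl γ k| * (|(k:ℝ) - γ| / |(k:ℝ)+1|) ≤ 1 * 1 := by
          apply mul_le_mul ih _ (by positivity) zero_le_one
          rw [h2, div_le_one hn1]; exact h1
      _ = 1 := by ring

lemma sum_gl {γ : ℝ} (n : ℕ) :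
    ∑ k ∈ Finset.range (n+1), gl γ k = gl (γ-1) n := by
  induction n with
  | zero => simp [gl_zero]
  | succ n ih =>
    rw [Finset.sum_range_succ, ih, gl_shift, gl_succ]
    have h2 : ((n : ℝ) + 1) ≠ 0 := by positivity
    field_simp
    ring

lemma sum_abs_gl_le {γ : ℝ} (hγ0 : 0 < γ) (hγ1 : γ < 1) (n : ℕ) :
    ∑ k ∈ Finset.range n, |gl γ k| ≤ 2 := by
  cases n with
  | zero => simp
  | succ m =>
    have h : ∀ k ∈ Finset.range (m+1),
        |gl γ k| = (if k = 0 then (2:ℝ) else 0) - gl γ k := by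
      intro k _
      cases k with
      | zero => norm_num [gl_zero]
      | succ j => simp [abs_of_nonpos (gl_nonpos hγ0 hγ1 j)]
    rw [Finset.sum_congr rfl h, Finset.sum_sub_distrib, sum_gl]
    have : ∑ k ∈ Finset.range (m+1), (if k = 0 then (2:ℝ) else 0) = 2 := by
      rw [Finset.sum_ite_eq' (Finset.range (m+1)) 0 (fun _ => (2:ℝ))]
      simp
    rw [this]
    have := (glm_bounds hγ0 hγ1 m).1
    linarith

lemma summable_abs_gl {γ : ℝ} (hγ0 : 0 < γ) (hγ1 : γ < 1) :
    Summable (fun k => |gl γ k|) :=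
  summable_of_sum_range_le (fun _ => abs_nonneg _) (sum_abs_gl_le hγ0 hγ1)

lemma glc_succ (γ : ℝ) (k : ℕ) :
    ((k:ℂ)+1) * (gl γ (k+1) : ℂ) = ((k:ℂ) - γ) * (gl γ k : ℂ) := by
  have hk : ((k:ℝ)+1) ≠ 0 := by positivity
  have h2 : ((k:ℝ)+1) * gl γ (k+1) = ((k:ℝ) - γ) * gl γ k := by
    rw [gl_succ]; field_simp
  exact_mod_cast h2

lemma summable_glc {γ : ℝ} (hγ0 : 0 < γ) (hγ1 : γ < 1) {w : ℂ} (hw : ‖w‖ ≤ 1) :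
    Summable (fun k => (gl γ k : ℂ) * w ^ k) := by
  apply Summable.of_norm
  apply Summable.of_nonneg_of_le (fun _ => norm_nonneg _) _ (summable_abs_gl hγ0 hγ1)
  intro k
  rw [norm_mul, norm_pow, Complex.norm_real, Real.norm_eq_abs]
  calc |gl γ k| * ‖w‖ ^ k ≤ |gl γ k| * 1 :=
        mul_le_mul_of_nonneg_left (pow_le_one₀ (norm_nonneg w) hw) (abs_nonneg _)
    _ = |gl γ k| := mul_one _

noncomputable def binC (γ : ℝ) (w : ℂ) : ℂ := ∑' k, (gl γ k : ℂ) * w ^ k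

lemma hasSum_binC_tsum {γ : ℝ} (hγ0 : 0 < γ) (hγ1 : γ < 1) {w : ℂ} (hw : ‖w‖ ≤ 1) :
    HasSum (fun k => (gl γ k : ℂ) * w ^ k) (binC γ w) :=
  (summable_glc hγ0 hγ1 hw).hasSum

lemma summable_kr {ρ : ℝ} (h0 : 0 ≤ ρ) (h1 : ρ < 1) :
    Summable (fun k : ℕ => (k : ℝ) * ρ ^ (k - 1)) := by
  rw [← summable_nat_add_iff 1]
  simp only [Nat.add_sub_cancel]
  have hg : Summable (fun n : ℕ => ρ ^ n) := summable_geometric_of_lt_one h0 h1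
  have hp : Summable (fun n : ℕ => (n:ℝ) ^ 1 * ρ ^ n) :=
    summable_pow_mul_geometric_of_norm_lt_one 1 (by rwa [Real.norm_eq_abs, _root_.abs_of_nonneg h0])
  apply (hp.add hg).congr
  intro n
  push_cast
  ring

lemma hasSum_shift {f : ℕ → ℂ} {a : ℂ} (h : HasSum f a) :
    HasSum (fun n => f (n+1)) (a - f 0) := by
  refine (hasSum_nat_add_iff 1).mpr ?_
  simpa using h

lemma binC_hasDeriv {γ : ℝ} (hγ0 : 0 < γ) (hγ1 : γ < 1) {w : ℂ} (hw : ‖w‖ < 1) :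
    HasDerivAt (binC γ) (∑' k, (gl γ k : ℂ) * ((k:ℂ) * w ^ (k - 1))) w := by
  set ρ := (1 + ‖w‖)/2 with hρdef
  have hρ0 : 0 ≤ ρ := by positivity
  have hρ1 : ρ < 1 := by rw [hρdef]; linarith
  have hwρ : ‖w‖ < ρ := by rw [hρdef]; linarith
  have key := hasDerivAt_tsum_of_isPreconnected (summable_kr hρ0 hρ1)
    (Metric.isOpen_ball (x := (0:ℂ)) (ε := ρ))
    ((convex_ball (0:ℂ) ρ).isPreconnected)
    (g := fun k y => (gl γ k : ℂ) * y ^ k)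
    (g' := fun k y => (gl γ k : ℂ) * ((k:ℂ) * y ^ (k-1)))
    (fun n y _ => (hasDerivAt_pow n y).const_mul ((gl γ n : ℂ)))
    (fun n y hy => ?_) (y₀ := 0) (by simpa using lt_of_le_of_lt (norm_nonneg w) hwρ)
    (summable_glc hγ0 hγ1 (by simp))
    (by simpa using hwρ)
  · exact key
  · have hyρ : ‖y‖ ≤ ρ := by
      rw [mem_ball_zero_iff] at hy; exact hy.le
    rw [norm_mul, norm_mul, norm_pow, Complex.norm_real, Real.norm_eq_abs,
      Complex.norm_natCast]
    calc |gl γ n| * ((n:ℝ) * ‖y‖ ^ (n-1)) ≤ 1 * ((n:ℝ) * ρ ^ (n-1)) := by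
          apply mul_le_mul (abs_gl_le_one hγ0 hγ1 n) _ (by positivity) zero_le_one
          exact mul_le_mul_of_nonneg_left (pow_le_pow_left₀ (norm_nonneg y) hyρ _) (Nat.cast_nonneg n)
      _ = (n:ℝ) * ρ ^ (n-1) := one_mul _

lemma binC_fe {γ : ℝ} (hγ0 : 0 < γ) (hγ1 : γ < 1) {y : ℂ} (hy : ‖y‖ < 1) :
    (1 - y) * (∑' k, (gl γ k : ℂ) * ((k:ℂ) * y ^ (k - 1))) = -(γ:ℂ) * binC γ y := by
  set c : ℕ → ℂ := fun k => (gl γ k : ℂ) with hc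
  have hsum : Summable (fun k => c k * ((k:ℂ) * y ^ (k-1))) := by
    apply Summable.of_norm
    apply Summable.of_nonneg_of_le (fun _ => norm_nonneg _) _ (summable_kr (norm_nonneg y) hy)
    intro k
    rw [norm_mul, norm_mul, norm_pow, Complex.norm_real, Real.norm_eq_abs, Complex.norm_natCast]
    calc |gl γ k| * ((k:ℝ) * ‖y‖ ^ (k-1)) ≤ 1 * ((k:ℝ) * ‖y‖ ^ (k-1)) :=
          mul_le_mul_of_nonneg_right (abs_gl_le_one hγ0 hγ1 k) (by positivity)
      _ = (k:ℝ) * ‖y‖ ^ (k-1) := one_mul _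
  set D := ∑' k, c k * ((k:ℂ) * y ^ (k-1)) with hD
  have hDsum : HasSum (fun k => c k * ((k:ℂ) * y ^ (k-1))) D := hsum.hasSum
  have hA : HasSum (fun k : ℕ => ((k:ℂ) - γ) * (c k * y ^ k)) D := by
    have h1 := hasSum_shift hDsum
    simp only [Nat.cast_zero, zero_mul, mul_zero, sub_zero, Nat.add_sub_cancel] at h1
    have hfun : ∀ n : ℕ, c (n+1) * ((((n+1):ℕ):ℂ) * y ^ n) = ((n:ℂ) - γ) * (c n * y ^ n) := by
      intro n
      have h := glc_succ γ n
      rw [hc]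
      push_cast
      linear_combination y ^ n * h
    simp only [hfun] at h1
    exact h1
  have hB := hA.mul_left y
  have hC := hasSum_shift hA
  have hc0 : c 0 = 1 := by rw [hc]; simp [gl_zero]
  simp only [Nat.cast_zero, zero_sub, hc0, pow_zero, mul_one, neg_mul, one_mul,
    sub_neg_eq_add] at hC
  -- hC : HasSum (fun k => ((↑(k+1):ℂ) - γ) * (c (k+1) * y^(k+1))) (D + γ)
  have hE := hC.sub hB
  have hfun2 : ∀ k : ℕ, ((((k+1):ℕ):ℂ) - γ) * (c (k+1) * y ^ (k+1))
      - y * (((k:ℂ) - γ) * (c k * y ^ k)) = -(γ:ℂ) * (c (k+1) * y ^ (k+1)) := by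
    intro k
    have h := glc_succ γ k
    rw [hc]
    push_cast
    linear_combination y ^ (k+1) * h
  simp only [hfun2] at hE
  -- hE : HasSum (fun k => -(γ:ℂ) * (c (k+1) * y^(k+1))) (D + γ - y * D)
  have hG := (hasSum_shift (hasSum_binC_tsum hγ0 hγ1 hy.le)).mul_left (-(γ:ℂ))
  have hc0' : (gl γ 0 : ℂ) * y ^ 0 = 1 := by simp [gl_zero]
  rw [hc0'] at hG
  -- hG : HasSum (fun k => -(γ:ℂ) * ((gl γ (k+1):ℂ) * y^(k+1))) (-(γ:ℂ) * (binC γ y - 1))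
  have hval : D + (γ:ℂ) - y * D = -(γ:ℂ) * (binC γ y - 1) := hE.unique hG
  linear_combination hval

lemma slit_of_norm_lt_one {w : ℂ} (hw : ‖w‖ < 1) : (1 - w) ∈ slitPlane := by
  rw [mem_slitPlane_iff]
  left
  have : w.re ≤ ‖w‖ := (abs_le.mp (Complex.abs_re_le_norm w)).2
  simp only [Complex.sub_re, Complex.one_re]
  linarith

lemma binC_eq_open {γ : ℝ} (hγ0 : 0 < γ) (hγ1 : γ < 1) :
    Set.EqOn (binC γ) (fun w => (1 - w) ^ (γ:ℂ)) (ball (0:ℂ) 1) := by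
  have hH : ∀ w ∈ ball (0:ℂ) 1,
      HasDerivAt (fun w => binC γ w * (1 - w) ^ (-(γ:ℂ))) 0 w := by
    intro w hw
    rw [mem_ball_zero_iff] at hw
    have hz : (1 - w) ≠ 0 := slitPlane_ne_zero (slit_of_norm_lt_one hw)
    have hd1 := binC_hasDeriv hγ0 hγ1 hw
    have hd2 : HasDerivAt (fun w : ℂ => (1 - w) ^ (-(γ:ℂ)))
        (-(γ:ℂ) * (1 - w) ^ (-(γ:ℂ) - 1) * (-1)) w :=
      ((hasDerivAt_id w).const_sub 1).cpow_const (slit_of_norm_lt_one hw)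
    have hmul := hd1.mul hd2
    have hsplit : (1 - w) ^ (-(γ:ℂ)) = (1 - w) ^ (-(γ:ℂ) - 1) * (1 - w) := by
      conv_lhs => rw [show -(γ:ℂ) = (-(γ:ℂ) - 1) + 1 by ring]
      rw [Complex.cpow_add _ _ hz, Complex.cpow_one]
    have hfe := binC_fe hγ0 hγ1 hw
    have : (∑' k, (gl γ k : ℂ) * ((k:ℂ) * w ^ (k - 1))) * (1 - w) ^ (-(γ:ℂ))
        + binC γ w * (-(γ:ℂ) * (1 - w) ^ (-(γ:ℂ) - 1) * (-1)) = 0 := by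
      rw [hsplit]
      linear_combination (1 - w) ^ (-(γ:ℂ) - 1) * hfe
    rwa [this] at hmul
  have hconst : ∀ w ∈ ball (0:ℂ) 1,
      binC γ w * (1 - w) ^ (-(γ:ℂ)) = binC γ 0 * (1 - 0) ^ (-(γ:ℂ)) := by
    intro w hw
    apply (convex_ball (0:ℂ) 1).is_const_of_fderivWithin_eq_zero
      (f := fun w => binC γ w * (1 - w) ^ (-(γ:ℂ)))
      (fun x hx => ((hH x hx).differentiableAt).differentiableWithinAt)
      (fun x hx => ?_) hw (by simp)
    rw [fderivWithin_of_isOpen Metric.isOpen_ball hx]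
    have h := (hH x hx).hasFDerivAt
    rw [h.fderiv]
    ext v
    simp
  have hbin0 : binC γ 0 = 1 := by
    unfold binC
    rw [tsum_eq_single 0 (fun k hk => by simp [zero_pow hk])]
    simp [gl_zero]
  intro w hw
  have hw' := mem_ball_zero_iff.mp hw
  have hz : (1 - w) ≠ 0 := slitPlane_ne_zero (slit_of_norm_lt_one hw')
  have h1 : binC γ w * (1 - w) ^ (-(γ:ℂ)) = 1 := by
    rw [hconst w hw, hbin0]
    simp
  have h2 : (1 - w) ^ (-(γ:ℂ)) * (1 - w) ^ (γ:ℂ) = 1 := by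
    rw [← Complex.cpow_add _ _ hz, neg_add_cancel, Complex.cpow_zero]
  calc binC γ w = binC γ w * ((1 - w) ^ (-(γ:ℂ)) * (1 - w) ^ (γ:ℂ)) := by rw [h2, mul_one]
    _ = (binC γ w * (1 - w) ^ (-(γ:ℂ))) * (1 - w) ^ (γ:ℂ) := by ring
    _ = (1 - w) ^ (γ:ℂ) := by rw [h1, one_mul]

lemma binC_cont {γ : ℝ} (hγ0 : 0 < γ) (hγ1 : γ < 1) :
    ContinuousOn (binC γ) (closedBall (0:ℂ) 1) := by
  have := tendstoUniformlyOn_tsum (f := fun k (x:ℂ) => (gl γ k : ℂ) * x ^ k)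
    (summable_abs_gl hγ0 hγ1) (s := closedBall (0:ℂ) 1) (fun k x hx => ?_)
  · exact this.continuousOn (Filter.Eventually.frequently (Filter.Eventually.of_forall fun t =>
      (continuousOn_finset_sum t (fun k _ =>
        (continuous_const.mul (continuous_pow k)).continuousOn))))
  · rw [mem_closedBall_zero_iff] at hx
    rw [norm_mul, norm_pow, Complex.norm_real, Real.norm_eq_abs]
    calc |gl γ k| * ‖x‖ ^ k ≤ |gl γ k| * 1 :=
          mul_le_mul_of_nonneg_left (pow_le_one₀ (norm_nonneg x) hx) (abs_nonneg _)
      _ = |gl γ k| := mul_one _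

lemma cpow_cont {γ : ℝ} (hγ0 : 0 < γ) :
    ContinuousOn (fun w : ℂ => (1 - w) ^ (γ:ℂ)) (closedBall (0:ℂ) 1) := by
  intro w hw
  rw [mem_closedBall_zero_iff] at hw
  by_cases hw1 : w = 1
  · subst hw1
    have hγc : (γ:ℂ) ≠ 0 := by exact_mod_cast hγ0.ne'
    unfold ContinuousWithinAt
    have hval : ((1:ℂ) - 1) ^ (γ:ℂ) = 0 := by
      rw [sub_self, Complex.zero_cpow hγc]
    rw [show ((fun w : ℂ => (1 - w) ^ (γ:ℂ)) 1) = 0 by simpa using hval]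
    rw [tendsto_zero_iff_norm_tendsto_zero]
    have t1 : Filter.Tendsto (fun w : ℂ => ‖(1:ℂ) - w‖) (nhds 1) (nhds 0) := by
      have : Filter.Tendsto (fun w : ℂ => (1:ℂ) - w) (nhds 1) (nhds 0) := by
        have h := ((continuous_const (y := (1:ℂ))).sub continuous_id).tendsto 1
        simpa using (show Filter.Tendsto (fun w : ℂ => (1:ℂ) - w) (nhds 1) (nhds ((1:ℂ) - 1)) from h)
      simpa using this.norm
    have t2 : Filter.Tendsto (fun r : ℝ => r ^ γ) (nhds 0) (nhds 0) := by
      have h := (Real.continuousAt_rpow_const 0 γ (Or.inr hγ0.le))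
      unfold ContinuousAt at h
      rwa [show ((fun x : ℝ => x ^ γ) 0) = 0 by simp [Real.zero_rpow hγ0.ne'] ] at h
    have := (t2.comp t1).mono_left (nhdsWithin_le_nhds (s := closedBall (0:ℂ) 1))
    apply Filter.Tendsto.congr _ this
    intro x
    simp only [Function.comp_apply]
    rw [norm_cpow_real]
  · apply ContinuousAt.continuousWithinAt
    apply ContinuousAt.comp (g := fun z : ℂ => z ^ (γ:ℂ))
    · apply continuousAt_cpow_const
      rw [mem_slitPlane_iff]
      by_cases him : w.im = 0
      · left
        simp only [Complex.sub_re, Complex.one_re]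
        have habs : ‖w‖ = |w.re| := by
          rw [Complex.norm_def, Complex.normSq_apply, him]
          rw [mul_zero, add_zero, ← Real.sqrt_sq_eq_abs, sq]
        have hre1 : |w.re| ≤ 1 := by rw [← habs]; exact hw
        rcases lt_or_eq_of_le (abs_le.mp hre1).2 with h | h
        · linarith
        · exfalso; exact hw1 (Complex.ext h him)
      · right
        simpa [Complex.sub_im, Complex.one_im] using him
    · exact (continuous_const.sub continuous_id).continuousAt

lemma hasSum_binomial {γ : ℝ} (hγ0 : 0 < γ) (hγ1 : γ < 1) {w : ℂ} (hw : ‖w‖ ≤ 1) :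
    HasSum (fun k => (gl γ k : ℂ) * w ^ k) ((1 - w) ^ (γ:ℂ)) := by
  have heq : Set.EqOn (binC γ) (fun w => (1 - w) ^ (γ:ℂ)) (closedBall (0:ℂ) 1) := by
    apply (binC_eq_open hγ0 hγ1).of_subset_closure (binC_cont hγ0 hγ1) (cpow_cont hγ0)
      ball_subset_closedBall
    rw [closure_ball (0:ℂ) one_ne_zero]
  have hmem : w ∈ closedBall (0:ℂ) 1 := by rwa [mem_closedBall_zero_iff]
  have := hasSum_binC_tsum hγ0 hγ1 hw
  rwa [heq hmem] at this

section
open Real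

/-- cos θ ^ γ ≤ cos (γ θ) for |θ| ≤ π/2, 0 < γ ≤ 1 -/
lemma cos_rpow_le {θ gam : ℝ} (hθ : |θ| ≤ π/2) (hγ0 : 0 < gam) (hγ1 : gam ≤ 1) :
    Real.cos θ ^ gam ≤ Real.cos (gam * θ) := by
  have hc : Real.cos θ = Real.cos |θ| := (Real.cos_abs θ).symm
  have hc2 : Real.cos (gam * θ) = Real.cos (gam * |θ|) := by
    rcases abs_choice θ with h | h
    · rw [h]
    · rw [h]; rw [mul_neg, Real.cos_neg]
  rw [hc, hc2]
  set t := |θ| with ht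
  have ht0 : 0 ≤ t := abs_nonneg θ
  have htpi : t ≤ π/2 := hθ
  have hmem1 : t ∈ Set.Icc (-(π/2)) (π/2) := ⟨by linarith [Real.pi_pos], htpi⟩
  have hmem2 : (0:ℝ) ∈ Set.Icc (-(π/2)) (π/2) := by
    constructor <;> [linarith [Real.pi_pos]; linarith [Real.pi_pos]]
  have hconc := strictConcaveOn_cos_Icc.concaveOn.2 hmem1 hmem2 hγ0.le
    (by linarith : (0:ℝ) ≤ 1 - gam) (by ring)
  simp only [smul_eq_mul, mul_zero, add_zero, Real.cos_zero, mul_one] at hconc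
  have hcosnn : 0 ≤ Real.cos t := Real.cos_nonneg_of_mem_Icc hmem1
  have hgm := Real.geom_mean_le_arith_mean2_weighted hγ0.le
    (by linarith : (0:ℝ) ≤ 1 - gam) hcosnn zero_le_one (by ring)
  rw [Real.one_rpow, mul_one, mul_one] at hgm
  calc Real.cos t ^ gam ≤ gam * Real.cos t + (1 - gam) := hgm
    _ ≤ Real.cos (gam * t) := hconc

lemma re_cpow {ζ : ℂ} (hre : 0 ≤ ζ.re) {gam : ℝ} (hγ0 : 0 < gam) (hγ1 : gam ≤ 1) :
    ζ.re ^ gam ≤ (ζ ^ (gam:ℂ)).re := by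
  by_cases h0 : ζ = 0
  · simp [h0, Complex.zero_cpow (by exact_mod_cast hγ0.ne' : (gam:ℂ) ≠ 0),
      Real.zero_rpow hγ0.ne']
  · have habs : 0 < ‖ζ‖ := norm_pos_iff.mpr h0
    have harg : |ζ.arg| ≤ π/2 := Complex.abs_arg_le_pi_div_two_iff.mpr hre
    have hcos : 0 ≤ Real.cos ζ.arg := by
      apply Real.cos_nonneg_of_mem_Icc
      constructor
      · linarith [(abs_le.mp harg).1]
      · exact (abs_le.mp harg).2
    have hre' : ζ.re = ‖ζ‖ * Real.cos ζ.arg := by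
      rw [Complex.cos_arg h0]; field_simp
    have hrhs : (ζ ^ (gam:ℂ)).re = ‖ζ‖ ^ gam * Real.cos (gam * ζ.arg) := by
      rw [Complex.cpow_def_of_ne_zero h0, Complex.exp_re]
      have h1 : (Complex.log ζ * (gam:ℂ)).re = Real.log ‖ζ‖ * gam := by
        simp [Complex.mul_re, Complex.log_re, Complex.log_im]
      have h2 : (Complex.log ζ * (gam:ℂ)).im = ζ.arg * gam := by
        simp [Complex.mul_im, Complex.log_re, Complex.log_im]
      rw [h1, h2, Real.rpow_def_of_pos habs, mul_comm ζ.arg gam]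
    rw [hrhs, hre', Real.mul_rpow habs.le hcos]
    exact mul_le_mul_of_nonneg_left (cos_rpow_le harg hγ0 hγ1)
      (Real.rpow_nonneg habs.le gam)

lemma re_mul_cpow {u v : ℂ} (hu : 0 < u.re) (hv : 0 ≤ v.re) (huv : 0 ≤ (u*v).re)
    {gam : ℝ} (hγ0 : 0 < gam) (hγ1 : gam ≤ 1) :
    ((u*v).re) ^ gam ≤ (u ^ (gam:ℂ) * v ^ (gam:ℂ)).re := by
  by_cases hv0 : v = 0
  · simp [hv0, Complex.zero_cpow (by exact_mod_cast hγ0.ne' : (gam:ℂ) ≠ 0),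
      Real.zero_rpow hγ0.ne']
  · have hu0 : u ≠ 0 := by
      intro h; rw [h] at hu; simp at hu
    have hau : |u.arg| < π/2 := Complex.abs_arg_lt_pi_div_two_iff.mpr (Or.inl hu)
    have hav : |v.arg| ≤ π/2 := Complex.abs_arg_le_pi_div_two_iff.mpr hv
    have hsum : u.arg + v.arg ∈ Set.Ioc (-π) π := by
      have h1 := abs_lt.mp hau
      have h2 := abs_le.mp hav
      constructor
      · linarith [Real.pi_pos]
      · linarith
    have hmul : u ^ (gam:ℂ) * v ^ (gam:ℂ) = (u*v) ^ (gam:ℂ) := by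
      rw [Complex.cpow_def_of_ne_zero hu0, Complex.cpow_def_of_ne_zero hv0,
        Complex.cpow_def_of_ne_zero (mul_ne_zero hu0 hv0), ← Complex.exp_add,
        Complex.log_mul hu0 hv0 hsum, add_mul]
    rw [hmul]
    exact re_cpow huv hγ0 hγ1

end

lemma hasSum_lub2C {γ : ℝ} (hγ0 : 0 < γ) (hγ1 : γ < 1) {w : ℂ} (hw : ‖w‖ ≤ 1) :
    HasSum (fun n => (lub2 γ n : ℂ) * w ^ n)
      ((((3/2 : ℝ) ^ γ : ℝ) : ℂ) * ((1 - w/3) ^ (γ:ℂ) * (1 - w) ^ (γ:ℂ))) := by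
  have hw3 : ‖w/3‖ ≤ 1 := by
    rw [norm_div]
    have : ‖(3:ℂ)‖ = 3 := by norm_num
    rw [this]
    linarith
  have hf : HasSum (fun k => (gl γ k : ℂ) * (w/3) ^ k) ((1 - w/3) ^ (γ:ℂ)) :=
    hasSum_binomial hγ0 hγ1 hw3
  have hh : HasSum (fun k => (gl γ k : ℂ) * w ^ k) ((1 - w) ^ (γ:ℂ)) :=
    hasSum_binomial hγ0 hγ1 hw
  have hbound : ∀ (v : ℂ), ‖v‖ ≤ 1 → ∀ k : ℕ, ‖(gl γ k : ℂ) * v ^ k‖ ≤ |gl γ k| := by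
    intro v hv k
    rw [norm_mul, norm_pow, Complex.norm_real, Real.norm_eq_abs]
    calc |gl γ k| * ‖v‖ ^ k ≤ |gl γ k| * 1 :=
          mul_le_mul_of_nonneg_left (pow_le_one₀ (norm_nonneg v) hv) (abs_nonneg _)
      _ = |gl γ k| := mul_one _
  have hfn : Summable (fun k => ‖(gl γ k : ℂ) * (w/3) ^ k‖) :=
    Summable.of_nonneg_of_le (fun _ => norm_nonneg _) (hbound _ hw3) (summable_abs_gl hγ0 hγ1)
  have hhn : Summable (fun k => ‖(gl γ k : ℂ) * w ^ k‖) :=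
    Summable.of_nonneg_of_le (fun _ => norm_nonneg _) (hbound _ hw) (summable_abs_gl hγ0 hγ1)
  have hC := hasSum_sum_range_mul_of_summable_norm hfn hhn
  rw [hf.tsum_eq, hh.tsum_eq] at hC
  have hC2 := hC.mul_left ((((3/2:ℝ)^γ : ℝ)) : ℂ)
  have hfun : ∀ n : ℕ, ((((3/2:ℝ)^γ : ℝ)) : ℂ) *
      (∑ k ∈ Finset.range (n+1), ((gl γ k : ℂ) * (w/3) ^ k) * ((gl γ (n-k) : ℂ) * w ^ (n-k)))
      = (lub2 γ n : ℂ) * w ^ n := by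
    intro n
    have hsum : ∀ k ∈ Finset.range (n+1),
        ((gl γ k : ℂ) * (w/3) ^ k) * ((gl γ (n-k) : ℂ) * w ^ (n-k))
        = (((1/3 : ℝ) ^ k * gl γ k * gl γ (n-k) : ℝ) : ℂ) * w ^ n := by
      intro k hk
      rw [Finset.mem_range] at hk
      have hkn : k ≤ n := Nat.lt_succ_iff.mp hk
      have hpow : (w/3) ^ k * w ^ (n-k) = ((1/3 : ℂ)) ^ k * w ^ n := by
        rw [div_pow, ← Nat.add_sub_cancel' hkn, pow_add]
        field_simp
        have h3 : (3:ℂ)^k * (1/3)^k = 1 := by rw [← mul_pow]; norm_num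
        rw [Nat.add_sub_cancel_left]
        linear_combination (-(w^k * w^(n-k))) * h3
      push_cast
      calc (gl γ k : ℂ) * (w/3) ^ k * ((gl γ (n-k) : ℂ) * w ^ (n-k))
          = ((gl γ k : ℂ) * (gl γ (n-k) : ℂ)) * ((w/3) ^ k * w ^ (n-k)) := by ring
        _ = ((gl γ k : ℂ) * (gl γ (n-k) : ℂ)) * ((1/3 : ℂ) ^ k * w ^ n) := by rw [hpow]
        _ = (1/3 : ℂ) ^ k * (gl γ k : ℂ) * (gl γ (n-k) : ℂ) * w ^ n := by ring
    rw [Finset.sum_congr rfl hsum, ← Finset.sum_mul]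
    unfold lub2
    push_cast
    ring
  simp only [hfun] at hC2
  exact hC2


theorem stmt14 (γ a s : ℝ) (hγ0 : 0 < γ) (hγ1 : γ < 1) (ha : 0 ≤ a) (hs : 0 ≤ s)
    (z : ℝ) (hz : z ∈ Set.Icc 0 Real.pi) :
    ∃ S : ℝ,
      HasSum (fun k : ℕ =>
        Real.exp (-(a + s) * ((k : ℝ) + 1)) * lub2 γ (k+1) *
          (Real.cos (((k : ℝ) + 1) * z) - Real.exp (s * ((k : ℝ) + 1)))) S ∧
      0 ≤ S := by
  set r : ℝ := Real.exp (-(a+s)) with hrdef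
  set x : ℝ := Real.exp (-a) with hxdef
  have hr0 : 0 < r := Real.exp_pos _
  have hx0 : 0 < x := Real.exp_pos _
  have hx1 : x ≤ 1 := by
    rw [hxdef, ← Real.exp_zero]; exact Real.exp_le_exp.mpr (by linarith)
  have hrx : r ≤ x := Real.exp_le_exp.mpr (by linarith)
  have hr1 : r ≤ 1 := le_trans hrx hx1
  set w : ℂ := (r:ℂ) * Complex.exp ((z:ℝ) * Complex.I) with hwdef
  have hnw : ‖w‖ = r := by
    rw [hwdef, norm_mul, Complex.norm_real, Real.norm_eq_abs, abs_of_pos hr0,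
      Complex.norm_exp_ofReal_mul_I, mul_one]
  have hw1 : ‖w‖ ≤ 1 := by rw [hnw]; exact hr1
  have hnx : ‖((x:ℝ):ℂ)‖ ≤ 1 := by
    rw [Complex.norm_real, Real.norm_eq_abs, abs_of_pos hx0]; exact hx1
  have hPw := hasSum_lub2C hγ0 hγ1 hw1
  have hPx := hasSum_lub2C hγ0 hγ1 hnx
  set Pw := ((((3/2:ℝ)^γ : ℝ)):ℂ) * ((1 - w/3) ^ (γ:ℂ) * (1 - w) ^ (γ:ℂ)) with hPwdef
  set Px := ((((3/2:ℝ)^γ : ℝ)):ℂ) *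
    ((1 - ((x:ℝ):ℂ)/3) ^ (γ:ℂ) * (1 - ((x:ℝ):ℂ)) ^ (γ:ℂ)) with hPxdef
  have h1 := hasSum_shift hPw
  have h2 := hasSum_shift hPx
  have hdiff := h1.sub h2
  have hdiff' : HasSum (fun k => ((lub2 γ (k+1):ℂ) * w^(k+1))
      - ((lub2 γ (k+1):ℂ) * ((x:ℝ):ℂ)^(k+1))) (Pw - Px) := by
    convert hdiff using 1
    rfl
    simp only [pow_zero, mul_one]
    ring
  have hre := Complex.hasSum_re hdiff'
  have hwpow : ∀ n : ℕ, (w ^ n).re = r ^ n * Real.cos ((n:ℝ) * z) := by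
    intro n
    rw [hwdef, mul_pow, ← Complex.exp_nat_mul]
    rw [show ((n:ℂ) * ((z:ℝ) * Complex.I)) = ((((n:ℝ) * z : ℝ)):ℂ) * Complex.I by
      push_cast; ring]
    rw [← Complex.ofReal_pow, Complex.re_ofReal_mul, Complex.exp_ofReal_mul_I_re]
  have hxpow : ∀ n : ℕ, (((x:ℝ):ℂ) ^ n).re = x ^ n := by
    intro n; rw [← Complex.ofReal_pow]; exact Complex.ofReal_re _
  have hterm : ∀ k : ℕ, (((lub2 γ (k+1):ℂ) * w^(k+1))
      - ((lub2 γ (k+1):ℂ) * ((x:ℝ):ℂ)^(k+1))).re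
      = Real.exp (-(a + s) * ((k : ℝ) + 1)) * lub2 γ (k+1) *
          (Real.cos (((k : ℝ) + 1) * z) - Real.exp (s * ((k : ℝ) + 1))) := by
    intro k
    rw [Complex.sub_re, Complex.re_ofReal_mul, Complex.re_ofReal_mul, hwpow, hxpow]
    have e1 : r ^ (k+1) = Real.exp (-(a+s) * ((k:ℝ)+1)) := by
      rw [hrdef, ← Real.exp_nat_mul]; congr 1; push_cast; ring
    have e2 : x ^ (k+1) = Real.exp (-(a+s) * ((k:ℝ)+1)) * Real.exp (s * ((k:ℝ)+1)) := by
      rw [hxdef, ← Real.exp_nat_mul, ← Real.exp_add]; congr 1; push_cast; ring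
    rw [e1, e2]
    rw [show (((k+1 : ℕ)):ℝ) = (k:ℝ)+1 by push_cast; ring]
    ring
  refine ⟨(Pw - Px).re, ?_, ?_⟩
  · simp only [hterm] at hre
    exact hre
  · rw [Complex.sub_re, sub_nonneg]
    have hA2B2 : w.re^2 + w.im^2 = r^2 := by
      have h2 : ‖w‖^2 = r^2 := by
        rw [hnw]
      rw [Complex.sq_norm, Complex.normSq_apply] at h2
      rw [← h2]; ring
    set A := w.re with hAdef
    set B := w.im with hBdef
    have hAr : A ≤ r := by nlinarith [sq_nonneg B, sq_nonneg (A - r), sq_nonneg (A + r)]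
    have hure : (1 - w/3).re = 1 - A/3 := by
      rw [Complex.sub_re, Complex.one_re,
        show (3:ℂ) = ((3:ℝ):ℂ) by norm_num, Complex.div_ofReal_re]
    have huim : (1 - w/3).im = -(B/3) := by
      rw [Complex.sub_im, Complex.one_im,
        show (3:ℂ) = ((3:ℝ):ℂ) by norm_num, Complex.div_ofReal_im]
      ring
    have hvre : (1 - w).re = 1 - A := by rw [Complex.sub_re, Complex.one_re]
    have hvim : (1 - w).im = -B := by rw [Complex.sub_im, Complex.one_im]; ring
    have huvre : ((1 - w/3) * (1 - w)).re = (1 - A/3)*(1-A) - (B/3)*B := by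
      rw [Complex.mul_re, hure, hvre, huim, hvim]; ring
    have hkey : (1 - x/3)*(1 - x) ≤ (1 - A/3)*(1-A) - (B/3)*B := by
      nlinarith [hA2B2, mul_nonneg (by linarith : (0:ℝ) ≤ r - A)
          (by linarith : (0:ℝ) ≤ 2 - (A + r)),
        mul_nonneg (by linarith : (0:ℝ) ≤ x - r) (by linarith : (0:ℝ) ≤ 4 - (x + r))]
    have hxfac0 : (0:ℝ) ≤ 1 - x/3 := by linarith
    have hxfac1 : (0:ℝ) ≤ 1 - x := by linarith
    have hprodnn : (0:ℝ) ≤ (1 - x/3)*(1-x) := mul_nonneg hxfac0 hxfac1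
    have huvnn : 0 ≤ ((1 - w/3) * (1 - w)).re := by rw [huvre]; linarith
    have hu : 0 < (1 - w/3).re := by rw [hure]; linarith
    have hv : 0 ≤ (1 - w).re := by rw [hvre]; linarith
    have hmain := re_mul_cpow hu hv huvnn hγ0 hγ1.le
    have hPxre : Px.re = (3/2:ℝ)^γ * ((1-x/3)^γ * ((1-x)^γ)) := by
      rw [hPxdef]
      rw [show (1 - ((x:ℝ):ℂ)/3) = (((1 - x/3 : ℝ)):ℂ) by push_cast; ring]
      rw [show (1 - ((x:ℝ):ℂ)) = (((1 - x : ℝ)):ℂ) by push_cast; ring]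
      rw [← Complex.ofReal_cpow hxfac0 γ, ← Complex.ofReal_cpow hxfac1 γ,
        ← Complex.ofReal_mul, ← Complex.ofReal_mul, Complex.ofReal_re]
    have hPwre : Pw.re = (3/2:ℝ)^γ * ((1 - w/3) ^ (γ:ℂ) * (1 - w) ^ (γ:ℂ)).re := by
      rw [hPwdef, Complex.re_ofReal_mul]
    have hCnn : (0:ℝ) ≤ (3/2:ℝ)^γ := Real.rpow_nonneg (by norm_num) γ
    rw [hPxre, hPwre]
    apply mul_le_mul_of_nonneg_left _ hCnn
    calc (1-x/3)^γ * (1-x)^γ = ((1-x/3)*(1-x))^γ := (Real.mul_rpow hxfac0 hxfac1).symm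
      _ ≤ (((1 - w/3) * (1 - w)).re)^γ := by
          apply Real.rpow_le_rpow hprodnn _ hγ0.le
          rw [huvre]; exact hkey
      _ ≤ ((1 - w/3) ^ (γ:ℂ) * (1 - w) ^ (γ:ℂ)).re := hmain
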